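/- arXiv:1512.07846 — 3 statements merged into one kernel-verified Lean document; each statement's English description precedes it below -/
import Mathlib

section
/- For any subspaces H₁, H₂, H₃ of E, the double commutator satisfies [[Π(H₁), Π(H₃)], Π(H₂)] = (Π(H₁) − Π(H₃))·𝔇(H₁,H₂,H₃)·Π(H₂) + Π(H₂)·𝔇(H₁,H₂,H₃)·(Π(H₁) − Π(H₃)), where the products are compositions of operators and [A,B] = AB − BA. -/
variable {E : Type*} [NormedAddCommGroup E] [InnerProductSpace ℂ E] [FiniteDimensional ℂ E]

/-- The orthogonal projection onto a subspace `K`, regarded as an operator on `E`. -/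
noncomputable def proj (K : Submodule ℂ E) : E →L[ℂ] E :=
  K.subtypeL.comp (K.orthogonalProjection)

/-- The Möbius (non-additivity) operator `𝔇(H₁,H₂)`. -/
noncomputable def MobD (H₁ H₂ : Submodule ℂ E) : E →L[ℂ] E :=
  proj (H₁ ⊔ H₂) + proj (H₁ ⊓ H₂) - proj H₁ - proj H₂

/-- The three-subspace Möbius operator `𝔇(H₁,H₂,H₃)`. -/
noncomputable def MobD₃ (H₁ H₂ H₃ : Submodule ℂ E) : E →L[ℂ] E :=
  proj (H₁ ⊔ H₂ ⊔ H₃) - proj (H₁ ⊔ H₂) - proj (H₁ ⊔ H₃) - proj (H₂ ⊔ H₃)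
    + proj H₁ + proj H₂ + proj H₃ - proj (H₁ ⊓ H₂ ⊓ H₃)

/-- The dual three-subspace Möbius operator `𝔇̃(H₁,H₂,H₃)`. -/
noncomputable def MobDt₃ (H₁ H₂ H₃ : Submodule ℂ E) : E →L[ℂ] E :=
  proj (H₁ ⊓ H₂ ⊓ H₃) - proj (H₁ ⊓ H₂) - proj (H₁ ⊓ H₃) - proj (H₂ ⊓ H₃)
    + proj H₁ + proj H₂ + proj H₃ - proj (H₁ ⊔ H₂ ⊔ H₃)

/-! Against `Π(H₂)` every term of `𝔇(H₁,H₂,H₃)` whose subspace is comparable with `H₂` is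
absorbed, and `Π(H₁) - Π(H₃)` annihilates `Π(H₁ ⊓ H₂ ⊓ H₃)` and turns what is left,
`Π(H₁) + Π(H₃) - Π(H₁ ⊔ H₃)`, into `[Π(H₁), Π(H₃)]`. This gives the first summand; the second is
its adjoint, and the adjoint of `[Π(H₁), Π(H₃)] Π(H₂)` is `-Π(H₂) [Π(H₁), Π(H₃)]`. -/

section Ring

variable {R : Type*} [Ring R] {p q r : R}

theorem sub_mul_add_sub_eq_commutator (hp : IsIdempotentElem p) (hq : IsIdempotentElem q)
    (hpr : p * r = p) (hqr : q * r = q) : (p - q) * (p + q - r) = p * q - q * p := by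
  simp only [sub_mul, mul_add, mul_sub, hp.eq, hq.eq, hpr, hqr]
  abel

end Ring

theorem isSelfAdjoint_proj (K : Submodule ℂ E) : IsSelfAdjoint (proj K) :=
  isSelfAdjoint_starProjection K

theorem isIdempotentElem_proj (K : Submodule ℂ E) : IsIdempotentElem (proj K) :=
  K.isIdempotentElem_starProjection

theorem proj_mul_proj_of_le {H K : Submodule ℂ E} (h : H ≤ K) : proj H * proj K = proj H :=
  Submodule.starProjection_comp_starProjection_of_le h

theorem proj_mul_proj_of_ge {H K : Submodule ℂ E} (h : H ≤ K) : proj K * proj H = proj H := by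
  simpa only [star_mul, (isSelfAdjoint_proj _).star_eq] using congrArg star (proj_mul_proj_of_le h)

theorem isSelfAdjoint_mobD₃ (H₁ H₂ H₃ : Submodule ℂ E) : IsSelfAdjoint (MobD₃ H₁ H₂ H₃) := by
  have h := isSelfAdjoint_proj (E := E)
  exact (((((((h _).sub (h _)).sub (h _)).sub (h _)).add (h _)).add (h _)).add (h _)).sub (h _)

theorem mobD₃_mul_proj_middle (H₁ H₂ H₃ : Submodule ℂ E) :
    MobD₃ H₁ H₂ H₃ * proj H₂
      = (proj H₁ + proj H₃ - proj (H₁ ⊔ H₃)) * proj H₂ - proj (H₁ ⊓ H₂ ⊓ H₃) := by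
  unfold MobD₃
  simp only [sub_mul, add_mul]
  rw [proj_mul_proj_of_ge (le_sup_of_le_left le_sup_right : H₂ ≤ H₁ ⊔ H₂ ⊔ H₃),
    proj_mul_proj_of_ge (le_sup_right : H₂ ≤ H₁ ⊔ H₂),
    proj_mul_proj_of_ge (le_sup_left : H₂ ≤ H₂ ⊔ H₃), (isIdempotentElem_proj H₂).eq,
    proj_mul_proj_of_le (inf_le_left.trans inf_le_right : H₁ ⊓ H₂ ⊓ H₃ ≤ H₂)]
  abel

theorem sub_proj_mul_mobD₃_mul_proj (H₁ H₂ H₃ : Submodule ℂ E) :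
    (proj H₁ - proj H₃) * MobD₃ H₁ H₂ H₃ * proj H₂
      = (proj H₁ * proj H₃ - proj H₃ * proj H₁) * proj H₂ := by
  have hcomm := sub_mul_add_sub_eq_commutator (isIdempotentElem_proj H₁)
    (isIdempotentElem_proj H₃) (proj_mul_proj_of_le le_sup_left) (proj_mul_proj_of_le le_sup_right)
  have hinf : (proj H₁ - proj H₃) * proj (H₁ ⊓ H₂ ⊓ H₃) = 0 := by
    rw [sub_mul, proj_mul_proj_of_ge (inf_le_left.trans inf_le_left),
      proj_mul_proj_of_ge inf_le_right, sub_self]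
  rw [mul_assoc, mobD₃_mul_proj_middle, mul_sub, hinf, sub_zero, ← mul_assoc, hcomm]

theorem double_commutator_eq (H₁ H₂ H₃ : Submodule ℂ E) :
    (proj H₁ * proj H₃ - proj H₃ * proj H₁) * proj H₂
      - proj H₂ * (proj H₁ * proj H₃ - proj H₃ * proj H₁) =
    (proj H₁ - proj H₃) * MobD₃ H₁ H₂ H₃ * proj H₂
      + proj H₂ * MobD₃ H₁ H₂ H₃ * (proj H₁ - proj H₃) := by
  have hleft := sub_proj_mul_mobD₃_mul_proj H₁ H₂ H₃
  have hright := congrArg star hleft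
  simp only [star_mul, star_sub, (isSelfAdjoint_proj _).star_eq,
    (isSelfAdjoint_mobD₃ H₁ H₂ H₃).star_eq, ← mul_assoc] at hright
  rw [hleft, hright]
  noncomm_ring
end

section
/- Let H₁, H₀ be subspaces of E and let H₁ᗮ denote the orthogonal complement of H₁. Then ϖ₁(H₁,H₁ᗮ|H₀) = 0 and ϖ₂(H₁,H₁ᗮ|H₀) = 0 if and only if the orthogonal projections commute: [Π(H₁), Π(H₀)] = 0. -/
variable {E : Type*} [NormedAddCommGroup E] [InnerProductSpace ℂ E] [FiniteDimensional ℂ E]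

/-- The non-distributivity projector `ϖ₁(H₁,H₂|H₀)`. -/
noncomputable def varpi₁ (H₁ H₂ H₀ : Submodule ℂ E) : E →L[ℂ] E :=
  proj ((H₁ ⊔ H₀) ⊓ (H₂ ⊔ H₀)) - proj ((H₁ ⊓ H₂) ⊔ H₀)

/-- The non-distributivity projector `ϖ₂(H₁,H₂|H₀)`. -/
noncomputable def varpi₂ (H₁ H₂ H₀ : Submodule ℂ E) : E →L[ℂ] E :=
  proj ((H₁ ⊔ H₂) ⊓ H₀) - proj ((H₁ ⊓ H₀) ⊔ (H₂ ⊓ H₀))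

/-!
For `H₂ = H₁ᗮ` we have `H₁ ⊔ H₂ = ⊤`, so `ϖ₂(H₁,H₁ᗮ|H₀) = Π(H₀) - Π((H₁ ⊓ H₀) ⊔ (H₁ᗮ ⊓ H₀))`
vanishes iff `H₀` splits along `H₁` and `H₁ᗮ`, i.e. iff `Π(H₁)` maps `H₀` into itself; for
self-adjoint idempotents this invariance is the same as `[Π(H₁), Π(H₀)] = 0`.
Since `Π(Kᗮ) = 1 - Π(K)`, orthocomplementation gives `ϖ₁(H₁,H₂|H₀) = ϖ₂(H₁ᗮ,H₂ᗮ|H₀ᗮ)`, which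
reduces the condition on `ϖ₁` to the commutation of `Π(H₁ᗮ)` and `Π(H₀ᗮ)`, an equivalent one.
-/

namespace Submodule

variable {𝕜 F : Type*} [RCLike 𝕜] [NormedAddCommGroup F] [InnerProductSpace 𝕜 F]

theorem commute_starProjection_iff_mapsTo [CompleteSpace F] {U V : Submodule 𝕜 F}
    [U.HasOrthogonalProjection] [V.HasOrthogonalProjection] :
    Commute U.starProjection V.starProjection ↔ Set.MapsTo U.starProjection V V := by
  set p := U.starProjection
  set q := V.starProjection
  refine ⟨fun h v hv ↦ ?_, fun h ↦ ?_⟩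
  · have hpq : p (q v) = q (p v) := DFunLike.congr_fun h.eq v
    rw [← starProjection_eq_self_iff.2 hv, hpq]
    exact starProjection_apply_mem V _
  · have hp : IsSelfAdjoint p := isSelfAdjoint_starProjection U
    have hq : IsSelfAdjoint q := isSelfAdjoint_starProjection V
    have hqpq : q * p * q = p * q := by
      ext x
      exact starProjection_eq_self_iff.2 (h (starProjection_apply_mem V x))
    -- `V` is `p`-invariant, so `p * q = q * p * q` is self-adjoint.
    rw [hp.commute_iff hq, ← hqpq]
    simpa only [hq.star_eq] using hp.conjugate' q

theorem inf_sup_orthogonal_inf_eq_iff_mapsTo {U V : Submodule 𝕜 F} [U.HasOrthogonalProjection] :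
    (U ⊓ V) ⊔ (Uᗮ ⊓ V) = V ↔ Set.MapsTo U.starProjection V V := by
  refine ⟨fun h v hv ↦ ?_, fun h ↦ le_antisymm (sup_le inf_le_right inf_le_right) fun v hv ↦ ?_⟩
  · rw [← h] at hv
    obtain ⟨a, ha, b, hb, rfl⟩ := mem_sup.1 hv
    rw [map_add, starProjection_eq_self_iff.2 ha.1, (starProjection_apply_eq_zero_iff U).2 hb.1,
      add_zero]
    exact ha.2
  · rw [← add_sub_cancel (U.starProjection v) v]
    exact add_mem_sup ⟨starProjection_apply_mem U v, h hv⟩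
      ⟨sub_starProjection_mem_orthogonal v, sub_mem hv (h hv)⟩

theorem orthogonal_inf [FiniteDimensional 𝕜 F] (K₁ K₂ : Submodule 𝕜 F) :
    (K₁ ⊓ K₂)ᗮ = K₁ᗮ ⊔ K₂ᗮ := by
  rw [← orthogonal_orthogonal (K₁ᗮ ⊔ K₂ᗮ), ← inf_orthogonal, orthogonal_orthogonal,
    orthogonal_orthogonal]

end Submodule

theorem Commute.one_sub_one_sub {R : Type*} [Ring R] {a b : R} (h : Commute a b) :
    Commute (1 - a) (1 - b) :=
  (Commute.one_right _).sub_right ((Commute.one_left b).sub_left h)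

theorem commute_one_sub_one_sub_iff {R : Type*} [Ring R] {a b : R} :
    Commute (1 - a) (1 - b) ↔ Commute a b :=
  ⟨fun h ↦ by simpa only [sub_sub_cancel] using h.one_sub_one_sub, Commute.one_sub_one_sub⟩

open Submodule

theorem proj_eq_starProjection (K : Submodule ℂ E) : proj K = K.starProjection := rfl

theorem proj_orthogonal (K : Submodule ℂ E) : proj Kᗮ = 1 - proj K :=
  starProjection_orthogonal' K

theorem commute_proj_orthogonal_iff {U V : Submodule ℂ E} :
    Commute (proj Uᗮ) (proj Vᗮ) ↔ Commute (proj U) (proj V) := by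
  rw [proj_orthogonal, proj_orthogonal, commute_one_sub_one_sub_iff]

theorem varpi₂_orthogonal_eq_zero_iff (U V : Submodule ℂ E) :
    varpi₂ U Uᗮ V = 0 ↔ Commute (proj U) (proj V) := by
  rw [varpi₂, sup_orthogonal_of_hasOrthogonalProjection, top_inf_eq, sub_eq_zero, eq_comm]
  simp only [proj_eq_starProjection, starProjection_inj, inf_sup_orthogonal_inf_eq_iff_mapsTo,
    commute_starProjection_iff_mapsTo]

theorem varpi₁_eq_varpi₂_orthogonal (H₁ H₂ H₀ : Submodule ℂ E) :
    varpi₁ H₁ H₂ H₀ = varpi₂ H₁ᗮ H₂ᗮ H₀ᗮ := by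
  have h₁ : ((H₁ᗮ ⊓ H₀ᗮ) ⊔ (H₂ᗮ ⊓ H₀ᗮ))ᗮ = (H₁ ⊔ H₀) ⊓ (H₂ ⊔ H₀) := by
    simp only [← inf_orthogonal, orthogonal_inf, orthogonal_orthogonal]
  have h₂ : ((H₁ᗮ ⊔ H₂ᗮ) ⊓ H₀ᗮ)ᗮ = (H₁ ⊓ H₂) ⊔ H₀ := by
    simp only [← inf_orthogonal, orthogonal_inf, orthogonal_orthogonal]
  rw [varpi₁, varpi₂, ← h₁, ← h₂, proj_orthogonal, proj_orthogonal]
  abel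

theorem varpi_orthogonal_eq_zero_iff_commute (H₁ H₀ : Submodule ℂ E) :
    (varpi₁ H₁ H₁ᗮ H₀ = 0 ∧ varpi₂ H₁ H₁ᗮ H₀ = 0) ↔
      proj H₁ * proj H₀ - proj H₀ * proj H₁ = 0 := by
  rw [varpi₁_eq_varpi₂_orthogonal, varpi₂_orthogonal_eq_zero_iff,
    varpi₂_orthogonal_eq_zero_iff, commute_proj_orthogonal_iff, and_self, sub_eq_zero, commute_iff_eq]
end

section
/- If H₁, H₂, H₀ are subspaces of E such that the orthogonal projections Π(H₁) and Π(H₂) each commute with Π(H₀) (i.e. [Π(H₁),Π(H₀)] = 0 and [Π(H₂),Π(H₀)] = 0), then ϖ₁(H₁,H₂|H₀) = 0 and ϖ₂(H₁,H₂|H₀) = 0. -/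
variable {E : Type*} [NormedAddCommGroup E] [InnerProductSpace ℂ E] [FiniteDimensional ℂ E]

/-!
Write `P₀` for the projection onto `H₀`. If `Π(Hᵢ)` commutes with `P₀`, then `P₀` maps `Hᵢ` into
itself, so every `x ∈ Hᵢ ⊔ H₀` splits as `(x - P₀ x) + P₀ x` with `x - P₀ x ∈ Hᵢ`, and every
`x ∈ Hᵢ` splits as `(x - P₀ x) + P₀ x` with `P₀ x ∈ Hᵢ ⊓ H₀`. These splittings give
`(H₁ ⊔ H₀) ⊓ (H₂ ⊔ H₀) = (H₁ ⊓ H₂) ⊔ H₀` and `(H₁ ⊔ H₂) ⊓ H₀ = (H₁ ⊓ H₀) ⊔ (H₂ ⊓ H₀)`.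
-/

namespace LinearMap.IsProj

open Submodule

variable {R M : Type*} [Ring R] [AddCommGroup M] [Module R M] {p : M →ₗ[R] M}
  {H₀ K K₁ K₂ : Submodule R M}

theorem sub_apply_mem_of_mem_sup (hp : IsProj H₀ p) (hK : K ∈ Module.End.invtSubmodule p)
    {x : M} (hx : x ∈ K ⊔ H₀) : x - p x ∈ K := by
  obtain ⟨a, ha, c, hc, rfl⟩ := mem_sup.mp hx
  have hac : a + c - p (a + c) = a - p a := by rw [map_add, hp.map_id c hc]; abel
  rw [hac]
  exact K.sub_mem ha (hK ha)

theorem apply_mem_inf (hp : IsProj H₀ p) (hK : K ∈ Module.End.invtSubmodule p) {x : M}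
    (hx : x ∈ K) : p x ∈ K ⊓ H₀ :=
  mem_inf.mpr ⟨hK hx, hp.map_mem x⟩

theorem sup_inf_sup_eq_inf_sup (hp : IsProj H₀ p) (h₁ : K₁ ∈ Module.End.invtSubmodule p)
    (h₂ : K₂ ∈ Module.End.invtSubmodule p) : (K₁ ⊔ H₀) ⊓ (K₂ ⊔ H₀) = K₁ ⊓ K₂ ⊔ H₀ := by
  refine le_antisymm (fun x hx ↦ ?_)
    (le_inf (sup_le_sup_right inf_le_left _) (sup_le_sup_right inf_le_right _))
  obtain ⟨hx₁, hx₂⟩ := mem_inf.mp hx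
  have hsub : x - p x ∈ K₁ ⊓ K₂ :=
    mem_inf.mpr ⟨hp.sub_apply_mem_of_mem_sup h₁ hx₁, hp.sub_apply_mem_of_mem_sup h₂ hx₂⟩
  simpa only [sub_add_cancel] using add_mem_sup hsub (hp.map_mem x)

theorem sup_inf_eq_inf_sup_inf (hp : IsProj H₀ p) (h₁ : K₁ ∈ Module.End.invtSubmodule p)
    (h₂ : K₂ ∈ Module.End.invtSubmodule p) : (K₁ ⊔ K₂) ⊓ H₀ = K₁ ⊓ H₀ ⊔ K₂ ⊓ H₀ := by
  refine le_antisymm (fun x hx ↦ ?_)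
    (sup_le (inf_le_inf_right _ le_sup_left) (inf_le_inf_right _ le_sup_right))
  obtain ⟨hx₁₂, hx₀⟩ := mem_inf.mp hx
  obtain ⟨a, ha, b, hb, rfl⟩ := mem_sup.mp hx₁₂
  rw [← hp.map_id _ hx₀, map_add]
  exact add_mem_sup (hp.apply_mem_inf h₁ ha) (hp.apply_mem_inf h₂ hb)

end LinearMap.IsProj

theorem isProj_proj (K : Submodule ℂ E) : LinearMap.IsProj K (proj K : E →ₗ[ℂ] E) :=
  ⟨K.starProjection_apply_mem, fun _ hx ↦ Submodule.starProjection_eq_self_iff.mpr hx⟩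

theorem mem_invtSubmodule_proj_of_commute {K H₀ : Submodule ℂ E}
    (h : Commute (proj K) (proj H₀)) : K ∈ Module.End.invtSubmodule (proj H₀ : E →ₗ[ℂ] E) := by
  have hK := (LinearMap.IsIdempotentElem.commute_iff (isProj_proj K).isIdempotentElem).mp
    (h.map ContinuousLinearMap.toLinearMapRingHom) |>.1
  rwa [(isProj_proj K).range] at hK

theorem varpi_eq_zero_of_commute (H₁ H₂ H₀ : Submodule ℂ E)
    (h₁ : proj H₁ * proj H₀ - proj H₀ * proj H₁ = 0)
    (h₂ : proj H₂ * proj H₀ - proj H₀ * proj H₂ = 0) :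
    varpi₁ H₁ H₂ H₀ = 0 ∧ varpi₂ H₁ H₂ H₀ = 0 := by
  have hp := isProj_proj H₀
  have hinv₁ := mem_invtSubmodule_proj_of_commute (sub_eq_zero.mp h₁)
  have hinv₂ := mem_invtSubmodule_proj_of_commute (sub_eq_zero.mp h₂)
  constructor
  · rw [varpi₁, hp.sup_inf_sup_eq_inf_sup hinv₁ hinv₂, sub_self]
  · rw [varpi₂, hp.sup_inf_eq_inf_sup_inf hinv₁ hinv₂, sub_self]
end
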